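/- arXiv:2206.10893 — 2 statements merged into one kernel-verified Lean document; each statement's English description precedes it below -/
import Mathlib

section
/- On the lattice of integral intervals Itv (elements ⊥, [ℓ,u] with ℓ ≤ u integers, [-∞,u], [ℓ,+∞], and ⊤ = [-∞,+∞], ordered by containment), the standard interval widening ∇ defined by ⊥ ∇ x = x ∇ ⊥ = x and [ℓ₀,u₀] ∇ [ℓ₁,u₁] = [if ℓ₁ < ℓ₀ then -∞ else ℓ₀, if u₀ < u₁ then +∞ else u₀] is a widening operator: it is an upper bound of its arguments, and for every ascending sequence (aᵢ) the sequence x₀ = a₀, x_{i+1} = xᵢ ∇ a_{i+1} eventually stabilizes. -/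
/-- The domain of integral intervals: `⊥` (the empty interval) or an interval
with lower bound in `ℤ ∪ {-∞}` and upper bound in `ℤ ∪ {+∞}`. -/
inductive Itv where
  | bot : Itv
  | intv (l : WithBot ℤ) (u : WithTop ℤ) : Itv

/-- Containment order on intervals. -/
def Itv.le : Itv → Itv → Prop
  | .bot, _ => True
  | .intv _ _, .bot => False
  | .intv l₀ u₀, .intv l₁ u₁ => l₁ ≤ l₀ ∧ u₀ ≤ u₁

instance : LE Itv := ⟨Itv.le⟩

/-- The standard interval widening. -/
noncomputable def Itv.widen : Itv → Itv → Itv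
  | .bot, x => x
  | x, .bot => x
  | .intv l₀ u₀, .intv l₁ u₁ =>
      .intv (if l₁ < l₀ then ⊥ else l₀) (if u₀ < u₁ then ⊤ else u₀)

theorem exists_forall_ge_eq_of_eq_or_lt {α β : Type*} [Preorder β] [WellFoundedLT β]
    (f : α → β) (x : ℕ → α) (hx : ∀ i, x (i + 1) = x i ∨ f (x (i + 1)) < f (x i)) :
    ∃ k, ∀ j ≥ k, x j = x k := by
  obtain ⟨_, ⟨k, rfl⟩, hmin⟩ :=
    wellFounded_lt.has_min (Set.range (f ∘ x)) (Set.range_nonempty _)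
  refine ⟨k, Nat.le_induction rfl fun j _ ih => ?_⟩
  rcases hx j with h | h
  · rw [h, ih]
  · exact (hmin _ ⟨j + 1, rfl⟩ (by rwa [ih] at h)).elim

namespace Itv

/-- Number of finite bounds, with `⊥` above every interval: widening only ever discards finite
bounds, so each step that changes the interval lowers this count. -/
def finiteBounds : Itv → ℕ
  | .bot => 3
  | .intv l u => (if l = ⊥ then 0 else 1) + (if u = ⊤ then 0 else 1)

theorem le_widen_left (a b : Itv) : a ≤ a.widen b := by
  rcases a with _ | ⟨l₀, u₀⟩ <;> rcases b with _ | ⟨l₁, u₁⟩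
  · trivial
  · trivial
  · exact ⟨le_rfl, le_rfl⟩
  · exact ⟨by split_ifs <;> simp, by split_ifs <;> simp⟩

theorem le_widen_right (a b : Itv) : b ≤ a.widen b := by
  rcases a with _ | ⟨l₀, u₀⟩ <;> rcases b with _ | ⟨l₁, u₁⟩
  · trivial
  · exact ⟨le_rfl, le_rfl⟩
  · trivial
  · exact ⟨by split_ifs <;> simp_all, by split_ifs <;> simp_all⟩

theorem widen_eq_or_finiteBounds_lt (a b : Itv) :
    a.widen b = a ∨ (a.widen b).finiteBounds < a.finiteBounds := by
  rcases a with _ | ⟨l₀, u₀⟩ <;> rcases b with _ | ⟨l₁, u₁⟩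
  · exact .inl rfl
  · right; simp only [widen, finiteBounds]; split_ifs <;> omega
  · exact .inl rfl
  · simp only [widen, finiteBounds]
    split_ifs <;> simp_all

end Itv

theorem stmt10 :
    (∀ a b : Itv, a ≤ Itv.widen a b ∧ b ≤ Itv.widen a b) ∧
    (∀ a : ℕ → Itv, (∀ i, a i ≤ a (i+1)) →
      ∀ x : ℕ → Itv, x 0 = a 0 → (∀ i, x (i+1) = Itv.widen (x i) (a (i+1))) →
        ∃ k, ∀ j ≥ k, x j = x k) := by
  refine ⟨fun a b => ⟨a.le_widen_left b, a.le_widen_right b⟩, fun a _ x _ hx => ?_⟩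
  refine exists_forall_ge_eq_of_eq_or_lt Itv.finiteBounds x fun i => ?_
  rw [hx i]
  exact Itv.widen_eq_or_finiteBounds_lt (x i) (a (i + 1))
end

section
/- Let D be a complete lattice with Galois connection (α, γ) to A, F_D : D → D monotone, and F_A a correct approximation of F_D (∀ a, F_D(γ(a)) ⊑ γ(F_A(a))). If x ∈ A satisfies F_A(x) ⊑ x, then for every k, the decoupled descending iterate F_D^k(γ(x)) is a sound over-approximation of the concrete least fixpoint in D: lfp(F_D) ⊑ F_D^k(γ(x)), and these iterates form a descending chain. -/
theorem stmt18 {D A : Type*} [CompleteLattice D] [CompleteLattice A]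
    (α : D → A) (γ : A → D) (gc : GaloisConnection α γ)
    (F_D : D → D) (hmono : Monotone F_D) (F_A : A → A)
    (hcorrect : ∀ a : A, F_D (γ a) ≤ γ (F_A a))
    (x : A) (hx : F_A x ≤ x) :
    ∀ k : ℕ, OrderHom.lfp ⟨F_D, hmono⟩ ≤ F_D^[k] (γ x) ∧
      F_D^[k+1] (γ x) ≤ F_D^[k] (γ x) := by
  have hpre : F_D (γ x) ≤ γ x := (hcorrect x).trans (gc.monotone_u hx)
  intro k
  induction k with
  | zero =>
    exact ⟨OrderHom.lfp_le _ hpre, hpre⟩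
  | succ k ih =>
    refine ⟨?_, ?_⟩
    · calc OrderHom.lfp ⟨F_D, hmono⟩ = F_D (OrderHom.lfp ⟨F_D, hmono⟩) :=
            (OrderHom.map_lfp (⟨F_D, hmono⟩ : D →o D)).symm
        _ ≤ F_D (F_D^[k] (γ x)) := hmono ih.1
        _ = F_D^[k+1] (γ x) := (Function.iterate_succ_apply' F_D k (γ x)).symm
    · have h := hmono ih.2
      rwa [← Function.iterate_succ_apply' F_D (k+1), ← Function.iterate_succ_apply' F_D k] at h
end
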